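/- arXiv:1105.4748 — 2 statements merged into one kernel-verified Lean document; each statement's English description precedes it below -/
import Mathlib

section
/- Let {D_1,...,D_n} be an R-basis of Der_K(R) and define b_{pj} ∈ R by ∂/∂x_p = sum_j b_{pj} D_j. If elements c_{ij}^k ∈ R satisfy sum_{i,j} b_{pi} b_{qj} c_{ij}^k + ∂b_{qk}/∂x_p - ∂b_{pk}/∂x_q = 0 for all p,q,k, then [D_i, D_j] = sum_k c_{ij}^k D_k. -/
/-!
Expanding `0 = ⁅∂/∂x_p, ∂/∂x_q⁆` with `∂/∂x_p = ∑ i, b p i • D i` gives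
`∑ i j, b p i * b q j • ⁅D i, D j⁆ = ∑ k, (∂b_pk/∂x_q - ∂b_qk/∂x_p) • D k`, and by hypothesis the
same identity holds with `⁅D i, D j⁆` replaced by `∑ k, c i j k • D k`. The difference of the two
families is therefore annihilated by `b ⊗ b`, and `b` is invertible because `D j (X k)` is its
inverse matrix.
-/

open MvPolynomial

namespace Derivation

variable {R A : Type*} [CommRing R] [CommRing A] [Algebra R A]

@[simp]
theorem sum_apply {ι : Type*} (s : Finset ι) (D : ι → Derivation R A A) (a : A) :
    (∑ i ∈ s, D i) a = ∑ i ∈ s, D i a := by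
  rw [← coeFnAddMonoidHom_apply, map_sum, Finset.sum_apply]
  rfl

theorem smul_lie_smul (a b : A) (D₁ D₂ : Derivation R A A) :
    ⁅a • D₁, b • D₂⁆ = (a * b) • ⁅D₁, D₂⁆ + (a * D₁ b) • D₂ - (b * D₂ a) • D₁ := by
  ext x
  simp only [commutator_apply, smul_apply, smul_eq_mul, leibniz, add_apply, sub_apply]
  ring

theorem sum_smul_lie_sum_smul {ι : Type*} [Fintype ι] (D : ι → Derivation R A A) (a b : ι → A) :
    ⁅∑ i, a i • D i, ∑ j, b j • D j⁆ =
      ∑ i, ∑ j, (a i * b j) • ⁅D i, D j⁆ + ∑ k, (∑ i, a i • D i) (b k) • D k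
        - ∑ k, (∑ j, b j • D j) (a k) • D k := by
  simp only [sum_lie_sum, smul_lie_smul, Finset.sum_sub_distrib, Finset.sum_add_distrib,
    sum_apply, smul_apply, smul_eq_mul, Finset.sum_smul]
  rw [Finset.sum_comm (f := fun i j => (a i * D i (b j)) • D j)]

end Derivation

theorem MvPolynomial.lie_pderiv_pderiv {σ R : Type*} [CommRing R] (p q : σ) :
    ⁅pderiv (R := R) p, (pderiv q : Derivation R (MvPolynomial σ R) (MvPolynomial σ R))⁆ = 0 := by
  classical
  refine derivation_ext fun m => ?_
  simp only [Derivation.commutator_apply, pderiv_X, Pi.single_apply]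
  split_ifs <;> simp

theorem eq_zero_of_forall_sum_smul_eq_zero {ι R M : Type*} [Fintype ι] [DecidableEq ι]
    [Semiring R] [AddCommMonoid M] [Module R M] {b d : Matrix ι ι R} (h : d * b = 1)
    {v : ι → M} (hv : ∀ p, ∑ i, b p i • v i = 0) : v = 0 := by
  funext s
  calc v s = ∑ i, (d * b) s i • v i := by simp [h, Matrix.one_apply]
    _ = ∑ p, d s p • ∑ i, b p i • v i := by
      simp only [Matrix.mul_apply, Finset.sum_smul, Finset.smul_sum, smul_smul]
      exact Finset.sum_comm
    _ = 0 := by simp [hv]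

theorem eq_zero_of_forall_sum_sum_mul_smul_eq_zero {ι R M : Type*} [Fintype ι] [DecidableEq ι]
    [Semiring R] [AddCommMonoid M] [Module R M] {b d : Matrix ι ι R} (h : d * b = 1)
    {L : ι → ι → M} (hL : ∀ p q, ∑ i, ∑ j, (b p i * b q j) • L i j = 0) : L = 0 := by
  have hrows : ∀ q i, ∑ j, b q j • L i j = 0 := fun q =>
    congrFun <| eq_zero_of_forall_sum_smul_eq_zero h fun p => by
      simpa only [Finset.smul_sum, smul_smul] using hL p q
  funext i
  exact eq_zero_of_forall_sum_smul_eq_zero h fun q => hrows q i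

theorem stmt5_general (n : ℕ) (K : Type*) [Field K]
    (D : Fin n → Derivation K (MvPolynomial (Fin n) K) (MvPolynomial (Fin n) K))
    (b : Fin n → Fin n → MvPolynomial (Fin n) K)
    (hb : ∀ p, (pderiv p :
        Derivation K (MvPolynomial (Fin n) K) (MvPolynomial (Fin n) K)) =
      ∑ j, b p j • D j)
    (c : Fin n → Fin n → Fin n → MvPolynomial (Fin n) K)
    (hc : ∀ p q k, (∑ i, ∑ j, b p i * b q j * c i j k)
      + pderiv p (b q k) - pderiv q (b p k) = 0) :
    ∀ i j, ⁅D i, D j⁆ = ∑ k, c i j k • D k := by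
  classical
  have hbd : Matrix.of b * Matrix.of (fun j k => D j (X k)) = 1 := by
    refine Matrix.ext fun p k => ?_
    simpa [Matrix.mul_apply, Matrix.one_apply, pderiv_X, Pi.single_apply, eq_comm] using
      congrArg (· (X k)) (hb p).symm
  have hbracket : ∀ p q, ∑ i, ∑ j, (b p i * b q j) • ⁅D i, D j⁆ =
      ∑ k, pderiv q (b p k) • D k - ∑ k, pderiv p (b q k) • D k := by
    intro p q
    have h := Derivation.sum_smul_lie_sum_smul D (b p) (b q)
    rw [← hb p, ← hb q, MvPolynomial.lie_pderiv_pderiv] at h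
    linear_combination (norm := module) -h
  have hstructure : ∀ p q, ∑ i, ∑ j, (b p i * b q j) • ∑ k, c i j k • D k =
      ∑ k, pderiv q (b p k) • D k - ∑ k, pderiv p (b q k) • D k := by
    intro p q
    calc _ = ∑ k, (∑ i, ∑ j, b p i * b q j * c i j k) • D k := by
          simp only [Finset.smul_sum, smul_smul, Finset.sum_smul]
          exact Finset.sum_comm_cycle
      _ = ∑ k, (pderiv q (b p k) - pderiv p (b q k)) • D k := by
          congr! 2 with k
          linear_combination hc p q k
      _ = _ := by
          rw [← Finset.sum_sub_distrib]
          -- `sub_smul` does not rewrite here: the scalar action on `Derivation` is not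
          -- syntactically the one of its `Module` instance.
          exact Finset.sum_congr rfl fun k _ => by module
  have hdiff : ∀ p q, ∑ i, ∑ j, (b p i * b q j) • (⁅D i, D j⁆ - ∑ k, c i j k • D k) = 0 := by
    intro p q
    simp only [smul_sub, Finset.sum_sub_distrib, hbracket, hstructure, sub_self]
  intro i j
  exact sub_eq_zero.mp <|
    congr_fun₂ (eq_zero_of_forall_sum_sum_mul_smul_eq_zero (mul_eq_one_comm.mp hbd) hdiff) i j

/-- Let `{D_1, ..., D_n}` be an `R`-basis of the module of `K`-derivations of
`R = K[x_1, ..., x_n]` and define `b p j ∈ R` by `∂/∂x_p = ∑ j, b p j • D j`.  If elements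
`c i j k ∈ R` satisfy `∑_{i,j} b p i * b q j * c i j k + ∂(b q k)/∂x_p - ∂(b p k)/∂x_q = 0`
for all `p, q, k`, then `⁅D i, D j⁆ = ∑ k, c i j k • D k`. -/
theorem stmt5 (n : ℕ) (K : Type*) [Field K] [CharZero K]
    (D : Fin n → Derivation K (MvPolynomial (Fin n) K) (MvPolynomial (Fin n) K))
    (B : Module.Basis (Fin n) (MvPolynomial (Fin n) K)
      (Derivation K (MvPolynomial (Fin n) K) (MvPolynomial (Fin n) K)))
    (hB : ∀ i, B i = D i)
    (b : Fin n → Fin n → MvPolynomial (Fin n) K)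
    (hb : ∀ p, (pderiv p :
        Derivation K (MvPolynomial (Fin n) K) (MvPolynomial (Fin n) K)) =
      ∑ j, b p j • D j)
    (c : Fin n → Fin n → Fin n → MvPolynomial (Fin n) K)
    (hc : ∀ p q k, (∑ i, ∑ j, b p i * b q j * c i j k)
      + pderiv p (b q k) - pderiv q (b p k) = 0) :
    ∀ i j, ⁅D i, D j⁆ = ∑ k, c i j k • D k :=
  stmt5_general n K D b hb c hc
end

section
/- In W_3(K) = Der_K(K[x_1,x_2,x_3]) with K a field of characteristic 0, the derivations E = -x_3 ∂/∂x_1 + (1 + 2x_2x_3) ∂/∂x_2 - x_3² ∂/∂x_3, H = ∂/∂x_1 - 2x_2 ∂/∂x_2 + 2x_3 ∂/∂x_3, F = ∂/∂x_3 satisfy [H,E] = 2E, [H,F] = -2F, [E,F] = H; hence their K-span is a Lie subalgebra isomorphic to sl_2(K), and {E, H, F} is a basis of the free K[x_1,x_2,x_3]-module W_3(K). -/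
open MvPolynomial

/-!
A derivation of `K[x₁, x₂, x₃]` is determined by its values on the variables, so the bracket
relations are a direct computation on `x₁, x₂, x₃`. The module `Der_K(K[x₁, x₂, x₃])` is free
on `∂/∂x₁, ∂/∂x₂, ∂/∂x₃`, and the coefficient matrix of `(E, H, F)` in this basis has
determinant `-1`, so `(E, H, F)` is again a basis. In particular `E, H, F` are linearly
independent over `K`, which makes `A ↦ a₁₁ H + a₁₂ E + a₂₁ F` an injective Lie homomorphism
`sl₂(K) → W₃(K)` with image `span_K {E, H, F}`.
-/

@[simp] lemma Derivation.map_ofNat {R A M : Type*} [CommSemiring R] [CommSemiring A]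
    [Algebra R A] [AddCommMonoid M] [Module A M] [Module R M] (D : Derivation R A M) (n : ℕ)
    [n.AtLeastTwo] : D (no_index (OfNat.ofNat n : A)) = 0 :=
  D.map_natCast n

lemma Module.Basis.exists_coe_eq_of_isUnit_det {ι R M : Type*} [Fintype ι] [DecidableEq ι]
    [CommRing R] [AddCommGroup M] [Module R M] (e : Module.Basis ι R M) {v : ι → M}
    (h : IsUnit (e.det v)) : ∃ b : Module.Basis ι R M, ⇑b = v := by
  obtain ⟨hli, hspan⟩ := e.is_basis_iff_det.mpr h
  exact ⟨.mk hli hspan.ge, Module.Basis.coe_mk _ _⟩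

namespace MvPolynomial

variable (σ R : Type*) [CommRing R]

noncomputable def derivationEquivPi :
    Derivation R (MvPolynomial σ R) (MvPolynomial σ R) ≃ₗ[MvPolynomial σ R]
      (σ → MvPolynomial σ R) where
  toFun D i := D (X i)
  map_add' _ _ := rfl
  map_smul' _ _ := rfl
  invFun := mkDerivation R
  left_inv _ := derivation_ext fun i => mkDerivation_X R _ i
  right_inv f := _root_.funext (mkDerivation_X R f)

noncomputable def derivationBasis [Finite σ] :
    Module.Basis σ (MvPolynomial σ R) (Derivation R (MvPolynomial σ R) (MvPolynomial σ R)) :=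
  .ofEquivFun (derivationEquivPi σ R)

variable {σ R}

@[simp] lemma derivationBasis_repr_apply [Finite σ]
    (D : Derivation R (MvPolynomial σ R) (MvPolynomial σ R)) (i : σ) :
    (derivationBasis σ R).repr D i = D (X i) :=
  rfl

end MvPolynomial

namespace LieAlgebra.SpecialLinear

lemma sl_fin_two_val_one_one {R : Type*} [CommRing R] (A : sl (Fin 2) R) :
    A.val 1 1 = -A.val 0 0 := by
  have hA : Matrix.trace A.val = 0 := A.2
  rw [Matrix.trace_fin_two] at hA
  linear_combination hA

end LieAlgebra.SpecialLinear

namespace IsSl2Triple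

open LieAlgebra.SpecialLinear

variable {R L : Type*} [CommRing R] [LieRing L] [LieAlgebra R L] {h e f : L}

variable (R) in
/-- The Lie homomorphism sending the standard triple `(diag(1, -1), E₁₂, E₂₁)` of `sl₂` to
`(h, e, f)`. -/
def toSl2Hom (t : IsSl2Triple h e f) : sl (Fin 2) R →ₗ⁅R⁆ L where
  toFun A := A.val 0 0 • h + A.val 0 1 • e + A.val 1 0 • f
  map_add' A B := by
    simp only [AddMemClass.coe_add, Matrix.add_apply, add_smul]
    abel
  map_smul' c A := by
    simp only [SetLike.val_smul, Matrix.smul_apply, smul_eq_mul, mul_smul, RingHom.id_apply,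
      smul_add]
  map_lie' {A B} := by
    have hhe := t.lie_h_e_smul R
    have hhf := t.lie_lie_smul_f R
    have hef := t.lie_e_f
    have heh : ⁅e, h⁆ = -((2 : R) • e) := by rw [← lie_skew, hhe]
    have hfh : ⁅f, h⁆ = (2 : R) • f := by rw [← lie_skew, hhf, neg_neg]
    have hfe : ⁅f, e⁆ = -h := by rw [← lie_skew, hef]
    simp only [sl_bracket, Matrix.sub_apply, Matrix.mul_apply, Fin.sum_univ_two,
      sl_fin_two_val_one_one A, sl_fin_two_val_one_one B, lie_add, add_lie, lie_smul, smul_lie,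
      lie_self, hhe, hhf, hef, heh, hfh, hfe]
    module

lemma toSl2Hom_apply (t : IsSl2Triple h e f) (A : sl (Fin 2) R) :
    t.toSl2Hom R A = A.val 0 0 • h + A.val 0 1 • e + A.val 1 0 • f :=
  rfl

lemma range_toSl2Hom (t : IsSl2Triple h e f) :
    (t.toSl2Hom R).range.toSubmodule = Submodule.span R {e, h, f} := by
  ext x
  rw [LieSubalgebra.mem_toSubmodule, LieHom.mem_range, Submodule.mem_span_triple]
  constructor
  · rintro ⟨A, rfl⟩
    exact ⟨A.val 0 1, A.val 0 0, A.val 1 0, by rw [toSl2Hom_apply]; abel⟩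
  · rintro ⟨a, b, c, rfl⟩
    refine ⟨⟨!![b, a; c, -b], by simp [sl, Matrix.trace_fin_two]⟩, ?_⟩
    rw [toSl2Hom_apply]
    simp
    abel

lemma injective_toSl2Hom (t : IsSl2Triple h e f) (hli : LinearIndependent R ![e, h, f]) :
    Function.Injective (t.toSl2Hom R) := by
  rw [injective_iff_map_eq_zero]
  intro A hA
  have hcoeff := Fintype.linearIndependent_iff.mp hli ![A.val 0 1, A.val 0 0, A.val 1 0]
    (by rw [← hA, toSl2Hom_apply, Fin.sum_univ_three]; simp; abel)
  ext i j
  fin_cases i <;> fin_cases j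
  · simpa using hcoeff 1
  · simpa using hcoeff 0
  · simpa using hcoeff 2
  · simpa [sl_fin_two_val_one_one] using hcoeff 1

end IsSl2Triple

namespace W3

variable (K : Type*) [CommRing K]

noncomputable def E : Derivation K (MvPolynomial (Fin 3) K) (MvPolynomial (Fin 3) K) :=
  (-(X 2) : MvPolynomial (Fin 3) K) • pderiv 0 +
    ((1 + 2 * X 1 * X 2 : MvPolynomial (Fin 3) K)) • pderiv 1 +
    (-(X 2 ^ 2) : MvPolynomial (Fin 3) K) • pderiv 2

noncomputable def H : Derivation K (MvPolynomial (Fin 3) K) (MvPolynomial (Fin 3) K) :=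
  pderiv 0 + ((-(2 * X 1) : MvPolynomial (Fin 3) K)) • pderiv 1 +
    ((2 * X 2 : MvPolynomial (Fin 3) K)) • pderiv 2

noncomputable def F : Derivation K (MvPolynomial (Fin 3) K) (MvPolynomial (Fin 3) K) :=
  pderiv 2

lemma lie_H_E : ⁅H K, E K⁆ = 2 • E K := by
  refine derivation_ext fun i => ?_
  fin_cases i <;> simp [E, H, Derivation.commutator_apply, pderiv_X] <;> ring

lemma lie_H_F : ⁅H K, F K⁆ = -(2 • F K) := by
  refine derivation_ext fun i => ?_
  fin_cases i <;> simp [H, F, Derivation.commutator_apply, pderiv_X]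

lemma lie_E_F : ⁅E K, F K⁆ = H K := by
  refine derivation_ext fun i => ?_
  fin_cases i <;> simp [E, H, F, Derivation.commutator_apply, pderiv_X]

lemma det_E_H_F : (derivationBasis (Fin 3) K).det ![E K, H K, F K] = -1 := by
  rw [Module.Basis.det_apply, Matrix.det_fin_three]
  simp [E, H, F, Module.Basis.toMatrix_apply, pderiv_X]
  ring

lemma exists_basis_E_H_F :
    ∃ b : Module.Basis (Fin 3) (MvPolynomial (Fin 3) K)
      (Derivation K (MvPolynomial (Fin 3) K) (MvPolynomial (Fin 3) K)), ⇑b = ![E K, H K, F K] :=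
  (derivationBasis (Fin 3) K).exists_coe_eq_of_isUnit_det
    (by rw [det_E_H_F]; exact isUnit_one.neg)

lemma linearIndependent_E_H_F : LinearIndependent K ![E K, H K, F K] := by
  obtain ⟨b, hb⟩ := exists_basis_E_H_F K
  exact hb ▸ b.linearIndependent.restrict_scalars' K

lemma isSl2Triple [Nontrivial K] : IsSl2Triple (H K) (E K) (F K) where
  h_ne_zero := (linearIndependent_E_H_F K).ne_zero 1
  lie_e_f := lie_E_F K
  lie_h_e_nsmul := lie_H_E K
  lie_h_f_nsmul := lie_H_F K

end W3

theorem stmt18_general (K : Type*) [Field K]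
    (E H F : Derivation K (MvPolynomial (Fin 3) K) (MvPolynomial (Fin 3) K))
    (hE : E = (-(X 2) : MvPolynomial (Fin 3) K) • pderiv 0 +
      ((1 + 2 * X 1 * X 2 : MvPolynomial (Fin 3) K)) • pderiv 1 +
      (-(X 2 ^ 2) : MvPolynomial (Fin 3) K) • pderiv 2)
    (hH : H = pderiv 0 + ((-(2 * X 1) : MvPolynomial (Fin 3) K)) • pderiv 1 +
      ((2 * X 2 : MvPolynomial (Fin 3) K)) • pderiv 2)
    (hF : F = pderiv 2) :
    ⁅H, E⁆ = 2 • E ∧ ⁅H, F⁆ = (-2 : ℤ) • F ∧ ⁅E, F⁆ = H ∧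
    (∃ S : LieSubalgebra K (Derivation K (MvPolynomial (Fin 3) K) (MvPolynomial (Fin 3) K)),
      S.toSubmodule = Submodule.span K {E, H, F} ∧
      Nonempty ((LieAlgebra.SpecialLinear.sl (Fin 2) K) ≃ₗ⁅K⁆ S)) ∧
    (∃ B : Module.Basis (Fin 3) (MvPolynomial (Fin 3) K)
        (Derivation K (MvPolynomial (Fin 3) K) (MvPolynomial (Fin 3) K)),
      B 0 = E ∧ B 1 = H ∧ B 2 = F) := by
  obtain rfl : E = W3.E K := hE
  obtain rfl : H = W3.H K := hH
  obtain rfl : F = W3.F K := hF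
  have t := W3.isSl2Triple K
  have hinj := t.injective_toSl2Hom (W3.linearIndependent_E_H_F K)
  obtain ⟨b, hb⟩ := W3.exists_basis_E_H_F K
  refine ⟨t.lie_h_e_nsmul, ?_, t.lie_e_f, ⟨_, t.range_toSl2Hom, ⟨.ofInjective _ hinj⟩⟩,
    b, by simp [hb]⟩
  rw [t.lie_h_f_nsmul, neg_smul, ← natCast_zsmul]
  rfl

/-- In `W_3(K) = Der_K(K[x_1, x_2, x_3])`, with `K` of characteristic zero, the derivations
`E = -x₃ ∂/∂x₁ + (1 + 2x₂x₃) ∂/∂x₂ - x₃² ∂/∂x₃`, `H = ∂/∂x₁ - 2x₂ ∂/∂x₂ + 2x₃ ∂/∂x₃`,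
`F = ∂/∂x₃` satisfy `⁅H,E⁆ = 2E`, `⁅H,F⁆ = -2F`, `⁅E,F⁆ = H`; hence their `K`-span is a Lie
subalgebra isomorphic to `sl₂(K)`, and `{E, H, F}` is a basis of the free
`K[x_1, x_2, x_3]`-module `W_3(K)`. -/
theorem stmt18 (K : Type*) [Field K] [CharZero K]
    (E H F : Derivation K (MvPolynomial (Fin 3) K) (MvPolynomial (Fin 3) K))
    (hE : E = (-(X 2) : MvPolynomial (Fin 3) K) • pderiv 0 +
      ((1 + 2 * X 1 * X 2 : MvPolynomial (Fin 3) K)) • pderiv 1 +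
      (-(X 2 ^ 2) : MvPolynomial (Fin 3) K) • pderiv 2)
    (hH : H = pderiv 0 + ((-(2 * X 1) : MvPolynomial (Fin 3) K)) • pderiv 1 +
      ((2 * X 2 : MvPolynomial (Fin 3) K)) • pderiv 2)
    (hF : F = pderiv 2) :
    ⁅H, E⁆ = 2 • E ∧ ⁅H, F⁆ = (-2 : ℤ) • F ∧ ⁅E, F⁆ = H ∧
    (∃ S : LieSubalgebra K (Derivation K (MvPolynomial (Fin 3) K) (MvPolynomial (Fin 3) K)),
      S.toSubmodule = Submodule.span K {E, H, F} ∧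
      Nonempty ((LieAlgebra.SpecialLinear.sl (Fin 2) K) ≃ₗ⁅K⁆ S)) ∧
    (∃ B : Module.Basis (Fin 3) (MvPolynomial (Fin 3) K)
        (Derivation K (MvPolynomial (Fin 3) K) (MvPolynomial (Fin 3) K)),
      B 0 = E ∧ B 1 = H ∧ B 2 = F) :=
  stmt18_general K E H F hE hH hF
end
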